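/- arXiv:2004.00311 — 2 statements merged into one kernel-verified Lean document; each statement's English description precedes it below -/
import Mathlib

section
/- Cayley's formula: the number of labeled trees on n vertices (equivalently, the number of minimally connected graphs, i.e. spanning trees of the complete graph K_n) equals n^{n-2} for n ≥ 1. -/
/-!
Prüfer's bijection. For a tree on at least three vertices, record the neighbour of its least
leaf, delete that leaf and encode the remaining tree recursively; a tree on two vertices has the
empty code. The code of a tree on `n` vertices has length `n - 2` and its entries are exactly the
vertices of degree at least two. So the leaf deleted first is the least vertex missing from the
code, and the tree is rebuilt by attaching it to the first entry of the code and decoding the rest.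

Vertices are `Fin (n + 2)`; deleting `ℓ` relabels the other vertices along
`ℓ.succAbove : Fin (n + 1) → Fin (n + 2)`.
-/

open SimpleGraph Finset

namespace Prufer

open scoped Classical

noncomputable section

variable {n : ℕ}

lemma ext_of_adj_of_comap_succAbove {G G' : SimpleGraph (Fin (n + 2))} {ℓ : Fin (n + 2)}
    (hℓ : ∀ y, G.Adj ℓ y ↔ G'.Adj ℓ y) (hcomap : G.comap ℓ.succAbove = G'.comap ℓ.succAbove) :
    G = G' := by
  ext x y
  rcases eq_or_ne x ℓ with rfl | hx
  · exact hℓ y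
  rcases eq_or_ne y ℓ with rfl | hy
  · rw [G.adj_comm, G'.adj_comm]
    exact hℓ x
  obtain ⟨x, rfl⟩ := Fin.exists_succAbove_eq hx
  obtain ⟨y, rfl⟩ := Fin.exists_succAbove_eq hy
  exact congr(SimpleGraph.Adj $hcomap x y)

def comapSuccAboveIso (G : SimpleGraph (Fin (n + 2))) (ℓ : Fin (n + 2)) :
    G.comap ℓ.succAbove ≃g G.induce {ℓ}ᶜ :=
  { finSuccAboveEquiv ℓ with map_rel_iff' := Iff.rfl }

lemma degree_succAbove (G : SimpleGraph (Fin (n + 2))) (ℓ : Fin (n + 2)) (y : Fin (n + 1)) :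
    G.degree (ℓ.succAbove y) =
      (G.comap ℓ.succAbove).degree y + if G.Adj (ℓ.succAbove y) ℓ then 1 else 0 := by
  have hmap : ((G.comap ℓ.succAbove).neighborFinset y).map ℓ.succAboveEmb =
      (G.neighborFinset (ℓ.succAbove y)).erase ℓ := by
    ext z
    rcases eq_or_ne z ℓ with rfl | hz
    · simp [Fin.succAbove_ne]
    obtain ⟨z, rfl⟩ := Fin.exists_succAbove_eq hz
    simp [Fin.succAbove_ne]
  rw [← card_neighborFinset_eq_degree, ← card_neighborFinset_eq_degree,
    ← card_map ℓ.succAboveEmb, hmap]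
  split_ifs with h
  · exact (card_erase_add_one ((mem_neighborFinset ..).mpr h)).symm
  · rw [erase_eq_of_notMem (by simpa using h), add_zero]

def attachLeaf (H : SimpleGraph (Fin (n + 1))) (ℓ a : Fin (n + 2)) : SimpleGraph (Fin (n + 2)) :=
  H.map ℓ.succAboveEmb ⊔ edge ℓ a

lemma attachLeaf_adj_self (H : SimpleGraph (Fin (n + 1))) {ℓ a : Fin (n + 2)} (ha : a ≠ ℓ) (y) :
    (attachLeaf H ℓ a).Adj ℓ y ↔ y = a := by
  have hℓ : ¬(H.map ℓ.succAboveEmb).Adj ℓ y := by simp [Fin.succAbove_ne, -Fin.coe_succAboveEmb]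
  rw [attachLeaf, sup_adj, edge_adj]
  grind

lemma comap_attachLeaf (H : SimpleGraph (Fin (n + 1))) (ℓ a : Fin (n + 2)) :
    (attachLeaf H ℓ a).comap ℓ.succAbove = H := by
  ext x y
  simp [attachLeaf, edge_adj, Fin.succAbove_ne, -Fin.coe_succAboveEmb]

lemma attachLeaf_comap {G : SimpleGraph (Fin (n + 2))} {ℓ a : Fin (n + 2)}
    (hℓ : ∀ y, G.Adj ℓ y ↔ y = a) : attachLeaf (G.comap ℓ.succAbove) ℓ a = G :=
  have ha : a ≠ ℓ := ((hℓ a).mpr rfl).ne'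
  ext_of_adj_of_comap_succAbove (fun y ↦ by rw [attachLeaf_adj_self _ ha, hℓ])
    (comap_attachLeaf _ ℓ a)

lemma degree_attachLeaf_succAbove (H : SimpleGraph (Fin (n + 1))) {ℓ a : Fin (n + 2)} (ha : a ≠ ℓ)
    (y : Fin (n + 1)) : (attachLeaf H ℓ a).degree (ℓ.succAbove y) =
      H.degree y + if ℓ.succAbove y = a then 1 else 0 := by
  have hcomap := comap_attachLeaf H ℓ a
  simp only [degree_succAbove, adj_comm _ _ ℓ, attachLeaf_adj_self H ha]
  congr!

lemma card_edgeSet_attachLeaf (H : SimpleGraph (Fin (n + 1))) {ℓ a : Fin (n + 2)}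
    (ha : a ≠ ℓ) : Nat.card (attachLeaf H ℓ a).edgeSet = Nat.card H.edgeSet + 1 := by
  have hℓ : s(ℓ, a) ∉ (H.map ℓ.succAboveEmb).edgeSet := by
    simp [Fin.succAbove_ne, -Fin.coe_succAboveEmb]
  rw [attachLeaf, edgeSet_sup, edgeSet_edge_of_ne ha.symm, Set.union_singleton,
    Nat.card_coe_set_eq, Set.ncard_insert_of_notMem hℓ, ← Nat.card_coe_set_eq, edgeSet_map,
    Nat.card_image_of_injective ℓ.succAboveEmb.sym2Map.injective]

lemma connected_attachLeaf_iff (H : SimpleGraph (Fin (n + 1))) {ℓ a : Fin (n + 2)} (ha : a ≠ ℓ) :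
    (attachLeaf H ℓ a).Connected ↔ H.Connected := by
  constructor
  · intro hG
    have hpre := hG.preconnected.induce_of_degree_eq_one (s := {ℓ}ᶜ) fun v hv ↦ by
      obtain rfl : v = ℓ := by simpa using hv
      rw [show (attachLeaf H v a).neighborSet v = {a} from Set.ext (attachLeaf_adj_self H ha)]
      exact Set.subsingleton_singleton
    rw [← comap_attachLeaf H ℓ a, connected_iff]
    exact ⟨(comapSuccAboveIso _ ℓ).preconnected_iff.mpr hpre, inferInstance⟩
  · intro hH
    let f : H →g attachLeaf H ℓ a :=
      (Hom.ofLE le_sup_left).comp (Embedding.map ℓ.succAboveEmb H).toHom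
    obtain ⟨a', rfl⟩ := Fin.exists_succAbove_eq ha
    have hreach (x) : (attachLeaf H ℓ (ℓ.succAbove a')).Reachable ℓ x := by
      have hℓ := ((attachLeaf_adj_self H ha ..).mpr rfl).reachable
      rcases eq_or_ne x ℓ with rfl | hx
      · rfl
      obtain ⟨x, rfl⟩ := Fin.exists_succAbove_eq hx
      exact hℓ.trans ((hH.preconnected a' x).map f)
    exact (connected_iff_exists_forall_reachable _).mpr ⟨ℓ, hreach⟩

lemma isTree_attachLeaf_iff (H : SimpleGraph (Fin (n + 1))) {ℓ a : Fin (n + 2)} (ha : a ≠ ℓ) :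
    (attachLeaf H ℓ a).IsTree ↔ H.IsTree := by
  rw [isTree_iff_connected_and_card, isTree_iff_connected_and_card, connected_attachLeaf_iff H ha,
    card_edgeSet_attachLeaf H ha]
  simp

lemma isTree_comap_succAbove_iff {G : SimpleGraph (Fin (n + 2))} {ℓ a : Fin (n + 2)}
    (hℓ : ∀ y, G.Adj ℓ y ↔ y = a) : (G.comap ℓ.succAbove).IsTree ↔ G.IsTree := by
  conv_rhs => rw [← attachLeaf_comap hℓ]
  exact (isTree_attachLeaf_iff _ ((hℓ a).mpr rfl).ne').symm

lemma isTree_iff_eq_top {T : SimpleGraph (Fin 2)} : T.IsTree ↔ T = ⊤ := by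
  refine ⟨fun hT ↦ ?_, fun h ↦ h ▸ ⟨connected_top, IsAcyclic.of_card_le_two (by simp)⟩⟩
  ext x y
  refine ⟨Adj.ne, fun hxy ↦ ?_⟩
  obtain ⟨z, hz⟩ := (degree_pos_iff_exists_adj ..).mp
    (hT.connected.preconnected.degree_pos_of_nontrivial x)
  obtain rfl : z = y := by have := hz.ne; have : x ≠ y := hxy; omega
  exact hz

lemma adj_iff_eq_inf_neighborFinset {V : Type*} [Fintype V] [LinearOrder V] [OrderTop V]
    {G : SimpleGraph V} {v : V} (h : G.degree v = 1) (y : V) : G.Adj v y ↔ y = (G.neighborFinset v).inf id := by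
  obtain ⟨a, ha⟩ := card_eq_one.mp ((card_neighborFinset_eq_degree G v).trans h)
  rw [ha, inf_singleton, id, ← mem_singleton, ← ha, mem_neighborFinset]

lemma inf_id_mem {α : Type*} [LinearOrder α] [OrderTop α] {s : Finset α} (hs : s.Nonempty) :
    s.inf id ∈ s := by
  obtain ⟨x, hx, h⟩ := s.exists_mem_eq_inf hs id
  exact h ▸ hx

lemma map_invFun_succAbove_map (ℓ : Fin (n + 2)) (c : List (Fin (n + 1))) :
    (c.map ℓ.succAbove).map (Function.invFun ℓ.succAbove) = c := by
  rw [List.map_map, (Function.leftInverse_invFun Fin.succAbove_right_injective).comp_eq_id,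
    List.map_id]

lemma map_succAbove_map_invFun {ℓ : Fin (n + 2)} {c : List (Fin (n + 2))} (h : ℓ ∉ c) :
    (c.map (Function.invFun ℓ.succAbove)).map ℓ.succAbove = c := by
  rw [List.map_map]
  refine List.map_congr_left (fun x hx ↦ ?_) |>.trans c.map_id
  exact Function.invFun_eq (Fin.exists_succAbove_eq (ne_of_mem_of_not_mem hx h))

def leastLeaf (G : SimpleGraph (Fin (n + 2))) : Fin (n + 2) :=
  ({x | G.degree x = 1} : Finset _).inf id

def leastMissing (c : List (Fin (n + 2))) : Fin (n + 2) :=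
  ({x | x ∉ c} : Finset _).inf id

def code : {n : ℕ} → SimpleGraph (Fin (n + 2)) → List (Fin (n + 2))
  | 0, _ => []
  | _ + 1, G =>
    let ℓ := leastLeaf G
    (G.neighborFinset ℓ).inf id :: (code (G.comap ℓ.succAbove)).map ℓ.succAbove

def decode : {n : ℕ} → List (Fin (n + 2)) → SimpleGraph (Fin (n + 2))
  | 0, _ => ⊤
  | _ + 1, [] => ⊥
  | _ + 1, a :: c =>
    let ℓ := leastMissing (a :: c)
    attachLeaf (decode (c.map (Function.invFun ℓ.succAbove))) ℓ a

lemma length_code : ∀ {n : ℕ} (G : SimpleGraph (Fin (n + 2))), (code G).length = n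
  | 0, _ => rfl
  | _ + 1, _ => by simp [code, length_code]

lemma code_eq_cons {G : SimpleGraph (Fin (n + 3))} {ℓ a : Fin (n + 3)} (hℓ : leastLeaf G = ℓ)
    (ha : ∀ y, G.Adj ℓ y ↔ y = a) :
    code G = a :: (code (G.comap ℓ.succAbove)).map ℓ.succAbove := by
  have : G.neighborFinset ℓ = {a} := by ext; simp [ha]
  subst hℓ
  simp [code, this]

lemma decode_cons {a ℓ : Fin (n + 3)} {c : List (Fin (n + 3))} (hℓ : leastMissing (a :: c) = ℓ) :
    decode (a :: c) = attachLeaf (decode (c.map (Function.invFun ℓ.succAbove))) ℓ a := by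
  subst hℓ
  rfl

lemma degree_leastLeaf {T : SimpleGraph (Fin (n + 2))} (hT : T.IsTree) :
    T.degree (leastLeaf T) = 1 := by
  obtain ⟨v, hv⟩ := hT.exists_vert_degree_one_of_nontrivial
  have h : leastLeaf T ∈ ({x | T.degree x = 1} : Finset _) := inf_id_mem ⟨v, by simpa⟩
  simpa using h

lemma leastMissing_notMem {c : List (Fin (n + 2))} (hc : c.length < n + 2) :
    leastMissing c ∉ c := by
  obtain ⟨x, -, hx⟩ := exists_mem_notMem_of_card_lt_card (s := c.toFinset) (t := univ)
    (c.toFinset_card_le.trans_lt (by simpa using hc))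
  have h : leastMissing c ∈ ({x | x ∉ c} : Finset _) := inf_id_mem ⟨x, by simpa using hx⟩
  simpa using h

lemma leastLeaf_eq_leastMissing {G : SimpleGraph (Fin (n + 2))} {c : List (Fin (n + 2))}
    (h : ∀ x, x ∈ c ↔ G.degree x ≠ 1) : leastLeaf G = leastMissing c := by
  simp only [leastLeaf, leastMissing, h, not_not]

lemma mem_cons_map_succAbove_iff {H : SimpleGraph (Fin (n + 2))} {ℓ a : Fin (n + 3)} (ha : a ≠ ℓ)
    (hH : H.Connected) {c : List (Fin (n + 2))} (hc : ∀ y, y ∈ c ↔ H.degree y ≠ 1)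
    (x : Fin (n + 3)) : x ∈ a :: c.map ℓ.succAbove ↔ (attachLeaf H ℓ a).degree x ≠ 1 := by
  rcases eq_or_ne x ℓ with rfl | hx
  · have : (attachLeaf H x a).degree x = 1 := by
      rw [← card_neighborFinset_eq_degree, card_eq_one]
      exact ⟨a, by ext; simp [attachLeaf_adj_self H ha]⟩
    simp [this, ha.symm, Fin.succAbove_ne]
  obtain ⟨y, rfl⟩ := Fin.exists_succAbove_eq hx
  simp only [degree_attachLeaf_succAbove H ha, List.mem_cons,
    List.mem_map_of_injective Fin.succAbove_right_injective, hc]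
  by_cases hya : ℓ.succAbove y = a
  · have := hH.preconnected.degree_pos_of_nontrivial y
    simp only [hya, true_or, if_true, true_iff]
    omega
  · simp [hya]

theorem mem_code_iff : ∀ {n : ℕ} {T : SimpleGraph (Fin (n + 2))}, T.IsTree →
    ∀ x, x ∈ code T ↔ T.degree x ≠ 1
  | 0, T, hT, x => by
    have := hT.connected.preconnected.degree_pos_of_nontrivial x
    have := T.degree_lt_card_verts x
    simp only [code, List.not_mem_nil, false_iff, not_not, Fintype.card_fin] at this ⊢
    omega
  | _ + 1, T, hT, x => by
    have hℓ := adj_iff_eq_inf_neighborFinset (degree_leastLeaf hT)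
    have hT' := (isTree_comap_succAbove_iff hℓ).mpr hT
    have := mem_cons_map_succAbove_iff ((hℓ _).mpr rfl).ne' hT'.connected (mem_code_iff hT') x
    rwa [attachLeaf_comap hℓ, ← code_eq_cons rfl hℓ] at this

theorem decode_code : ∀ {n : ℕ} {T : SimpleGraph (Fin (n + 2))}, T.IsTree → decode (code T) = T
  | 0, _, hT => (isTree_iff_eq_top.mp hT).symm
  | _ + 1, T, hT => by
    set ℓ := leastLeaf T
    have hℓ := adj_iff_eq_inf_neighborFinset (degree_leastLeaf hT)
    have hT' := (isTree_comap_succAbove_iff hℓ).mpr hT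
    have hmiss : leastMissing (code T) = ℓ := (leastLeaf_eq_leastMissing (mem_code_iff hT)).symm
    rw [code_eq_cons rfl hℓ] at hmiss ⊢
    rw [decode_cons hmiss, map_invFun_succAbove_map, decode_code hT', attachLeaf_comap hℓ]

theorem isTree_decode : ∀ {n : ℕ} {c : List (Fin (n + 2))}, c.length = n → (decode c).IsTree
  | 0, _, _ => isTree_iff_eq_top.mpr rfl
  | _ + 1, a :: c, hc => by
    have hℓ := leastMissing_notMem (c := a :: c) (by simp only [List.length_cons] at hc ⊢; omega)
    rw [decode_cons rfl]
    exact (isTree_attachLeaf_iff _ (ne_of_mem_of_not_mem List.mem_cons_self hℓ)).mpr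
      (isTree_decode (by simpa using hc))

theorem code_decode : ∀ {n : ℕ} {c : List (Fin (n + 2))}, c.length = n → code (decode c) = c
  | 0, [], _ => rfl
  | n + 1, a :: c, hc => by
    set ℓ := leastMissing (a :: c)
    have hℓc : ℓ ∉ a :: c := leastMissing_notMem (by simp only [List.length_cons] at hc ⊢; omega)
    have ha : a ≠ ℓ := ne_of_mem_of_not_mem List.mem_cons_self hℓc
    set c' := c.map (Function.invFun ℓ.succAbove)
    have hc' : c'.length = n := by simpa [c'] using hc
    have hmap : c'.map ℓ.succAbove = c := map_succAbove_map_invFun (List.not_mem_of_not_mem_cons hℓc)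
    have hT' := isTree_decode hc'
    have hmem : ∀ x, x ∈ a :: c ↔ (attachLeaf (decode c') ℓ a).degree x ≠ 1 := by
      rw [← hmap]
      refine mem_cons_map_succAbove_iff ha hT'.connected ?_
      conv => enter [y, 1]; rw [← code_decode hc']
      exact mem_code_iff hT'
    rw [decode_cons rfl, code_eq_cons (leastLeaf_eq_leastMissing hmem) (attachLeaf_adj_self _ ha),
      comap_attachLeaf, code_decode hc', hmap]

def pruferEquiv : {T : SimpleGraph (Fin (n + 2)) // T.IsTree} ≃ List.Vector (Fin (n + 2)) n where
  toFun T := ⟨code T.1, length_code T.1⟩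
  invFun c := ⟨decode c.1, isTree_decode c.2⟩
  left_inv T := Subtype.ext (decode_code T.2)
  right_inv c := Subtype.ext (code_decode c.2)

end

theorem card_isTree (n : ℕ) : Nat.card {T : SimpleGraph (Fin (n + 2)) // T.IsTree} = (n + 2) ^ n := by
  rw [Nat.card_congr pruferEquiv, Nat.card_eq_fintype_card, card_vector, Fintype.card_fin]

end Prufer

/-- Cayley's formula: the number of labeled trees on `n ≥ 1` vertices
(connected acyclic simple graphs on `{1,…,n}`) equals `n^(n-2)`. -/
theorem cayley_formula (n : ℕ) (hn : 1 ≤ n) :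
    Nat.card {G : SimpleGraph (Fin n) // G.IsTree} = n ^ (n - 2) := by
  obtain _ | _ | n := n
  · omega
  · rw [zero_add, one_pow, Nat.card_eq_one_iff_unique]
    exact ⟨inferInstance, ⟨⊥, .of_subsingleton⟩⟩
  · exact Prufer.card_isTree n
end

section
/- Recollision cone estimate: let x_p ≠ x_q in ℝ^d and ε, τ > 0. The set of relative velocities u = v_p - v_q ∈ ℝ^d with |u| ≤ R for which there exists a time 0 < s ≤ τ with |x_p - x_q - u s| ≤ ε is contained in a cone around the direction (x_p - x_q)/|x_p - x_q| whose intersection with the ball of radius R has Lebesgue measure at most C_d R^d (ε/|x_p - x_q|)^{d-1} for a dimensional constant C_d, provided ε ≤ |x_p-x_q|/2. -/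
/-!
If `‖w - s • u‖ ≤ ε ≤ ‖w‖ / 2` with `s > 0`, projecting onto `ℝ ∙ w` and onto its orthogonal
complement gives `s ‖u⊥‖ ≤ ε` and `s ‖u∥‖ ≥ ‖w‖ / 2`, so `u` lies in the cone
`‖u⊥‖ ≤ c ‖u∥‖` with `c = 2ε / ‖w‖`. Inside the ball of radius `R` this cone is covered by the
image of the ball of radius `2R` under the linear map that fixes `ℝ ∙ w` and scales its
orthogonal complement by `c`; that map has determinant `c ^ (d - 1)`.
-/

open MeasureTheory Metric Module

namespace Submodule

variable {E : Type*} [NormedAddCommGroup E] [InnerProductSpace ℝ E]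
  (K : Submodule ℝ E) [K.HasOrthogonalProjection]

noncomputable def scaleOrthogonal (c : ℝ) : E →L[ℝ] E :=
  K.starProjection + c • Kᗮ.starProjection

lemma scaleOrthogonal_apply (c : ℝ) (u : E) :
    K.scaleOrthogonal c u = K.starProjection u + c • Kᗮ.starProjection u := rfl

theorem det_scaleOrthogonal [FiniteDimensional ℝ E] (c : ℝ) :
    LinearMap.det (K.scaleOrthogonal c : E →ₗ[ℝ] E) = c ^ finrank ℝ Kᗮ := by
  let e := K.prodEquivOfIsCompl Kᗮ K.isCompl_orthogonal
  have hconj : e.symm.toLinearMap ∘ₗ (K.scaleOrthogonal c : E →ₗ[ℝ] E) ∘ₗ e.toLinearMap =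
      LinearMap.prodMap LinearMap.id (c • LinearMap.id) := by
    refine LinearMap.ext fun ⟨x, y⟩ => (LinearEquiv.symm_apply_eq e).2 ?_
    simp [e, scaleOrthogonal_apply, (K.starProjection_apply_eq_zero_iff).2 y.2]
  rw [← LinearMap.det_conj _ e.symm, LinearEquiv.symm_symm, hconj, LinearMap.det_prodMap,
    LinearMap.det_id, LinearMap.det_smul, LinearMap.det_id, one_mul, mul_one]

def coneAround (c : ℝ) : Set E :=
  {u | ‖Kᗮ.starProjection u‖ ≤ c * ‖K.starProjection u‖}

theorem mem_coneAround_of_norm_sub_smul_le {w u : E} {s ε : ℝ} (hwK : w ∈ K) (hw : w ≠ 0)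
    (hs : 0 < s) (hwu : ‖w - s • u‖ ≤ ε) (hεw : ε ≤ ‖w‖ / 2) :
    u ∈ K.coneAround (2 * ε / ‖w‖) := by
  have h_orth : s * ‖Kᗮ.starProjection u‖ ≤ ε :=
    calc s * ‖Kᗮ.starProjection u‖ = ‖Kᗮ.starProjection (w - s • u)‖ := by
          rw [map_sub, map_smul, starProjection_orthogonal_apply_eq_zero hwK, zero_sub, norm_neg,
            norm_smul, Real.norm_of_nonneg hs.le]
      _ ≤ ε := (norm_starProjection_apply_le _ _).trans hwu
  have h_par : ‖w‖ - ε ≤ s * ‖K.starProjection u‖ := by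
    have : ‖w - s • K.starProjection u‖ ≤ ε := by
      calc ‖w - s • K.starProjection u‖ = ‖K.starProjection (w - s • u)‖ := by
            rw [map_sub, map_smul, (K.starProjection_eq_self_iff).2 hwK]
        _ ≤ ε := (norm_starProjection_apply_le _ _).trans hwu
    have := norm_sub_norm_le w (s • K.starProjection u)
    rw [norm_smul, Real.norm_of_nonneg hs.le] at this
    linarith
  have hε0 : 0 ≤ ε := (norm_nonneg _).trans hwu
  have hw0 : 0 < ‖w‖ := norm_pos_iff.2 hw
  show ‖Kᗮ.starProjection u‖ ≤ 2 * ε / ‖w‖ * ‖K.starProjection u‖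
  rw [div_mul_eq_mul_div, le_div_iff₀ hw0]
  refine le_of_mul_le_mul_left ?_ hs
  nlinarith

theorem coneAround_inter_closedBall_subset_image {c : ℝ} (hc : 0 < c) (R : ℝ) :
    K.coneAround c ∩ closedBall 0 R ⊆ K.scaleOrthogonal c '' closedBall 0 (2 * R) := by
  rintro u ⟨hcone, hR⟩
  rw [mem_closedBall_zero_iff] at hR
  refine ⟨K.starProjection u + c⁻¹ • Kᗮ.starProjection u, ?_, ?_⟩
  · rw [mem_closedBall_zero_iff]
    calc ‖K.starProjection u + c⁻¹ • Kᗮ.starProjection u‖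
        ≤ ‖K.starProjection u‖ + c⁻¹ * ‖Kᗮ.starProjection u‖ := by
          refine (norm_add_le _ _).trans_eq ?_
          rw [norm_smul, Real.norm_of_nonneg (inv_nonneg.2 hc.le)]
      _ ≤ ‖K.starProjection u‖ + ‖K.starProjection u‖ := by
          gcongr
          rw [inv_mul_le_iff₀ hc]
          exact hcone
      _ ≤ 2 * R := by linarith [norm_starProjection_apply_le K u]
  · rw [scaleOrthogonal_apply, map_add, map_add, map_smul, map_smul,
      (K.starProjection_eq_self_iff).2 (K.starProjection_apply_mem u),
      (K.starProjection_apply_eq_zero_iff).2 (Kᗮ.starProjection_apply_mem u),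
      starProjection_orthogonal_apply_eq_zero (K.starProjection_apply_mem u),
      (Kᗮ.starProjection_eq_self_iff).2 (Kᗮ.starProjection_apply_mem u), smul_zero, add_zero,
      zero_add, smul_smul, mul_inv_cancel₀ hc.ne', one_smul,
      starProjection_add_starProjection_orthogonal]

theorem addHaar_coneAround_inter_closedBall_le [FiniteDimensional ℝ E] [MeasurableSpace E]
    [BorelSpace E] (μ : Measure E) [μ.IsAddHaarMeasure] {c : ℝ} (hc : 0 < c) (R : ℝ) :
    μ (K.coneAround c ∩ closedBall 0 R) ≤
      ENNReal.ofReal (c ^ finrank ℝ Kᗮ) * μ (closedBall 0 (2 * R)) :=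
  calc μ (K.coneAround c ∩ closedBall 0 R)
      ≤ μ (K.scaleOrthogonal c '' closedBall 0 (2 * R)) :=
        measure_mono (K.coneAround_inter_closedBall_subset_image hc R)
    _ = _ := by
        rw [← ContinuousLinearMap.coe_coe, Measure.addHaar_image_linearMap, det_scaleOrthogonal,
          abs_of_nonneg (by positivity)]

end Submodule

theorem recollision_cone_estimate_general (d : ℕ) :
    ∃ C : ℝ, 0 < C ∧
      ∀ (xp xq : EuclideanSpace ℝ (Fin d)) (R τ ε : ℝ),
        xp ≠ xq → 0 < R → 0 < τ → 0 < ε → ε ≤ ‖xp - xq‖ / 2 →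
        volume {u : EuclideanSpace ℝ (Fin d) |
            ‖u‖ ≤ R ∧ ∃ s ∈ Set.Ioc (0 : ℝ) τ, ‖xp - xq - s • u‖ ≤ ε}
          ≤ ENNReal.ofReal (C * R ^ d * (ε / ‖xp - xq‖) ^ (d - 1)) := by
  set V := (volume (closedBall (0 : EuclideanSpace ℝ (Fin d)) 2)).toReal
  have hV : 0 < V := ENNReal.toReal_pos (measure_closedBall_pos _ _ two_pos).ne'
    measure_closedBall_lt_top.ne
  refine ⟨2 ^ (d - 1) * V, by positivity, fun xp xq R τ ε hne hR _ hε hεL => ?_⟩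
  set K := ℝ ∙ (xp - xq)
  have hw : xp - xq ≠ 0 := sub_ne_zero.2 hne
  have hdim : finrank ℝ Kᗮ = d - 1 := by
    have := K.finrank_add_finrank_orthogonal
    rw [finrank_span_singleton hw, finrank_euclideanSpace_fin] at this
    omega
  have hsub : {u : EuclideanSpace ℝ (Fin d) |
      ‖u‖ ≤ R ∧ ∃ s ∈ Set.Ioc (0 : ℝ) τ, ‖xp - xq - s • u‖ ≤ ε} ⊆
      K.coneAround (2 * ε / ‖xp - xq‖) ∩ closedBall 0 R := by
    rintro u ⟨hu, s, hs, hsu⟩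
    exact ⟨K.mem_coneAround_of_norm_sub_smul_le (Submodule.mem_span_singleton_self _) hw hs.1 hsu
      hεL, mem_closedBall_zero_iff.2 hu⟩
  calc _ ≤ _ := (measure_mono hsub).trans
        (K.addHaar_coneAround_inter_closedBall_le volume (by positivity) R)
    _ = _ := by
        rw [hdim, mul_comm 2 R, Measure.addHaar_closedBall_mul volume 0 hR.le zero_le_two,
          finrank_euclideanSpace_fin, ← ENNReal.ofReal_toReal measure_closedBall_lt_top.ne,
          ← ENNReal.ofReal_mul (by positivity), ← ENNReal.ofReal_mul (by positivity)]
        congr 1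
        rw [mul_div_assoc, mul_pow]
        ring

/-- Recollision cone estimate: for `x_p ≠ x_q` and `0 < ε ≤ |x_p - x_q|/2`, the set of
relative velocities `u` with `|u| ≤ R` leading to a recollision within time `τ`
(i.e. `|x_p - x_q - s u| ≤ ε` for some `0 < s ≤ τ`) has Lebesgue measure at most
`C_d R^d (ε/|x_p - x_q|)^(d-1)` for a dimensional constant `C_d`. -/
theorem recollision_cone_estimate (d : ℕ) (hd : 2 ≤ d) :
    ∃ C : ℝ, 0 < C ∧
      ∀ (xp xq : EuclideanSpace ℝ (Fin d)) (R τ ε : ℝ),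
        xp ≠ xq → 0 < R → 0 < τ → 0 < ε → ε ≤ ‖xp - xq‖ / 2 →
        volume {u : EuclideanSpace ℝ (Fin d) |
            ‖u‖ ≤ R ∧ ∃ s ∈ Set.Ioc (0 : ℝ) τ, ‖xp - xq - s • u‖ ≤ ε}
          ≤ ENNReal.ofReal (C * R ^ d * (ε / ‖xp - xq‖) ^ (d - 1)) :=
  recollision_cone_estimate_general d
end
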